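/- For every fixed θ > 0 and every a > 0, sup_{u ≥ a} [ψ′(θ) + (ψ(θ) − ψ(u))²] / (ψ′(u)² (1 + (u − θ)²)) = +∞. (Hence, without an upper truncation bound, the Gamma recursive estimation procedure fails the growth condition (2) of the convergence corollary.) -/

import Mathlib

/-
The recurrence `ψ(x + 1) = ψ(x) + 1/x` and the mean value theorem give, for every `x > 0`, a point
`c ∈ (x, x + 1)` with `ψ′(c) = 1/x`. Along such points the denominator `ψ′(c)² (1 + (c − θ)²)`
stays bounded, while `ψ(c) ≥ log (c − 1)` (convexity of `log Γ`) makes the numerator diverge.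
-/

/-- The digamma function `ψ(x) = (d/dx) log Γ(x)`. -/
noncomputable def digamma (x : ℝ) : ℝ := deriv (fun y => Real.log (Real.Gamma y)) x

/-- The trigamma function `ψ′(x) = (d²/dx²) log Γ(x)`. -/
noncomputable def trigamma (x : ℝ) : ℝ := deriv digamma x

open Set Filter Real

theorem Complex.analyticAt_Gamma {s : ℂ} (hs : ∀ m : ℕ, s ≠ -m) :
    AnalyticAt ℂ Complex.Gamma s := by
  have hinv : AnalyticAt ℂ Gamma⁻¹ s := differentiable_one_div_Gamma.analyticAt s
  simpa only [inv_inv] using hinv.inv (inv_ne_zero (Gamma_ne_zero hs))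

theorem Real.analyticAt_Gamma {x : ℝ} (hx : ∀ m : ℕ, x ≠ -m) : AnalyticAt ℝ Gamma x := by
  have hre : Gamma = fun y : ℝ => (Complex.Gamma y).re := by
    ext y; rw [Complex.Gamma_ofReal, Complex.ofReal_re]
  rw [hre]
  exact (Complex.analyticAt_Gamma fun m => by exact_mod_cast hx m).re_ofReal

theorem analyticOnNhd_log_Gamma : AnalyticOnNhd ℝ (fun x => log (Gamma x)) (Ioi 0) :=
  fun x (hx : 0 < x) =>
    (analyticAt_Gamma fun m => by linarith [(Nat.cast_nonneg m : (0 : ℝ) ≤ m)]).log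
      (Gamma_pos_of_pos hx)

theorem analyticOnNhd_digamma : AnalyticOnNhd ℝ digamma (Ioi 0) :=
  analyticOnNhd_log_Gamma.deriv_of_isOpen isOpen_Ioi

theorem log_Gamma_add_one {x : ℝ} (hx : 0 < x) :
    log (Gamma (x + 1)) = log (Gamma x) + log x := by
  rw [Gamma_add_one hx.ne', log_mul hx.ne' (Gamma_pos_of_pos hx).ne', add_comm]

theorem digamma_add_one {x : ℝ} (hx : 0 < x) : digamma (x + 1) = digamma x + x⁻¹ := by
  unfold digamma
  rw [← deriv_comp_add_const, ← deriv_log,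
    ← deriv_add (analyticOnNhd_log_Gamma x hx).differentiableAt (differentiableAt_log hx.ne')]
  refine EventuallyEq.deriv_eq ?_
  filter_upwards [eventually_gt_nhds hx] with y hy
  exact log_Gamma_add_one hy

theorem log_sub_one_le_digamma {x : ℝ} (hx : 1 < x) : log (x - 1) ≤ digamma x := by
  have hx₀ : 0 < x - 1 := by linarith
  have hslope := convexOn_log_Gamma.slope_le_deriv (mem_Ioi.2 hx₀) (mem_Ioi.2 (by linarith))
    (by linarith) (analyticOnNhd_log_Gamma x (by linarith : 0 < x)).differentiableAt
  have hrec := log_Gamma_add_one hx₀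
  rw [sub_add_cancel] at hrec
  rw [slope_def_field, sub_sub_cancel, div_one] at hslope
  simp only [Function.comp_apply, hrec] at hslope
  exact (le_of_eq (by ring)).trans hslope

theorem tendsto_digamma_atTop : Tendsto digamma atTop atTop := by
  refine tendsto_atTop_mono' _ ?_
    (tendsto_log_atTop.comp (tendsto_atTop_add_const_right _ (-1) tendsto_id))
  filter_upwards [eventually_gt_atTop 1] with x hx
  exact log_sub_one_le_digamma hx

theorem exists_trigamma_eq_inv {x : ℝ} (hx : 0 < x) :
    ∃ c ∈ Ioo x (x + 1), trigamma c = x⁻¹ := by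
  have hsub : Icc x (x + 1) ⊆ Ioi 0 := fun y hy => hx.trans_le hy.1
  obtain ⟨c, hc, hderiv⟩ := exists_deriv_eq_slope digamma (lt_add_one x)
    (analyticOnNhd_digamma.continuousOn.mono hsub)
    (analyticOnNhd_digamma.differentiableOn.mono (Ioo_subset_Icc_self.trans hsub))
  refine ⟨c, hc, ?_⟩
  rw [trigamma, hderiv, digamma_add_one hx, add_sub_cancel_left, add_sub_cancel_left, div_one]

theorem inv_sq_mul_one_add_sq_sub_le {x c θ : ℝ} (hx : 1 ≤ x) (hθ : |θ| ≤ x)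
    (hc : c ∈ Ioo x (x + 1)) : x⁻¹ ^ 2 * (1 + (c - θ) ^ 2) ≤ 10 := by
  have hcθ : |c - θ| ≤ 3 * x := by
    rw [abs_le] at hθ ⊢
    constructor <;> linarith [hc.1, hc.2]
  have hsq : (c - θ) ^ 2 ≤ 9 * x ^ 2 := by
    nlinarith [sq_abs (c - θ), abs_nonneg (c - θ)]
  rw [inv_pow, inv_mul_le_iff₀ (by positivity)]
  nlinarith

theorem Filter.Tendsto.atTop_div_of_pos_of_le {ι : Type*} {l : Filter ι} {f g : ι → ℝ} {C : ℝ}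
    (hf : Tendsto f l atTop) (hC : 0 < C) (hg : ∀ᶠ i in l, 0 < g i ∧ g i ≤ C) :
    Tendsto (fun i => f i / g i) l atTop := by
  refine tendsto_atTop_mono' _ ?_ (hf.atTop_div_const hC)
  filter_upwards [hg, hf.eventually_ge_atTop 0] with i hgi hfi
  exact div_le_div_of_nonneg_left hfi hgi.1 hgi.2

theorem stmt_16_general (θ : ℝ) (a : ℝ) :
    ∀ M : ℝ, ∃ u : ℝ, a ≤ u ∧
      M < (trigamma θ + (digamma θ - digamma u) ^ 2) /
            ((trigamma u) ^ 2 * (1 + (u - θ) ^ 2)) := by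
  choose c hc htri using fun n : ℕ => exists_trigamma_eq_inv (Nat.cast_add_one_pos n)
  have hc_top : Tendsto c atTop atTop := tendsto_atTop_mono (fun n => (hc n).1.le)
    (tendsto_atTop_add_const_right _ 1 tendsto_natCast_atTop_atTop)
  have hnum : Tendsto (fun n => trigamma θ + (digamma θ - digamma (c n)) ^ 2) atTop atTop := by
    simp_rw [sub_sq_comm (digamma θ)]
    exact tendsto_atTop_add_const_left _ _ ((tendsto_pow_atTop two_ne_zero).comp
      (tendsto_atTop_add_const_right _ _ (tendsto_digamma_atTop.comp hc_top)))
  have hden : ∀ᶠ n in atTop, 0 < trigamma (c n) ^ 2 * (1 + (c n - θ) ^ 2) ∧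
      trigamma (c n) ^ 2 * (1 + (c n - θ) ^ 2) ≤ 10 := by
    filter_upwards [eventually_ge_atTop ⌈|θ|⌉₊] with n hn
    rw [htri]
    exact ⟨by positivity, inv_sq_mul_one_add_sq_sub_le (by simp) ((Nat.le_ceil _).trans
      (by exact_mod_cast hn.trans (Nat.le_succ n))) (hc n)⟩
  have hratio := hnum.atTop_div_of_pos_of_le (by norm_num) hden
  intro M
  obtain ⟨n, hn⟩ := ((hratio.eventually_gt_atTop M).and (hc_top.eventually_ge_atTop a)).exists
  exact ⟨c n, hn.2, hn.1⟩

/-- For every fixed `θ > 0` and every `a > 0`,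
`sup_{u ≥ a} [ψ′(θ) + (ψ(θ) − ψ(u))²] / (ψ′(u)² (1 + (u − θ)²)) = +∞`,
i.e. the quantity is unbounded above over `{u : u ≥ a}`. -/
theorem stmt_16 (θ : ℝ) (hθ : 0 < θ) (a : ℝ) (ha : 0 < a) :
    ∀ M : ℝ, ∃ u : ℝ, a ≤ u ∧
      M < (trigamma θ + (digamma θ - digamma u) ^ 2) /
            ((trigamma u) ^ 2 * (1 + (u - θ) ^ 2)) :=
  stmt_16_general θ a
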